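/- Let n ≥ 1, let k = (k_1, …, k_n) be a regular tuple of integers, and let h denote the 2n×2n permutation matrix swapping the n-th and 2n-th standard basis vectors and fixing all others. Suppose J ∈ GO_{2n}(ℂ) satisfies (Jh) D_k(w) (Jh)^{−1} = D_k(w)^{−1} for every w ∈ ℂ× and (Jh)² = 1. Then ν(J) = 1 and det J = (−1)^{n+1}; consequently J lies in GSO_{2n}(ℂ) if and only if n is odd. -/

import Mathlib

open Matrix

noncomputable section

/-- 2n×2n matrices, indexed by `Fin n ⊕ Fin n`. -/
abbrev Mat (n : ℕ) (k : Type*) := Matrix (Fin n ⊕ Fin n) (Fin n ⊕ Fin n) k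

/-- The standard split symmetric form matrix `Q_{2n} = [[0, 1], [1, 0]]`. -/
def Qmat (n : ℕ) : Mat n ℂ := fromBlocks 0 1 1 0

/-- `A ∈ GO_{2n}(ℂ)` with multiplier `ν`. -/
def inGO (n : ℕ) (A : Mat n ℂ) (ν : ℂ) : Prop :=
  IsUnit A.det ∧ ν ≠ 0 ∧ Aᵀ * Qmat n * A = ν • Qmat n

/-- `A ∈ GSO_{2n}(ℂ)` with multiplier `ν`: in `GO_{2n}` and `det A = ν ^ n`. -/
def inGSO (n : ℕ) (A : Mat n ℂ) (ν : ℂ) : Prop :=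
  inGO n A ν ∧ A.det = ν ^ n

/-- `D_k(w) = diag(w^{k_1}, …, w^{k_n}, w^{-k_1}, …, w^{-k_n})`. -/
def Dk {n : ℕ} (kk : Fin n → ℤ) (w : ℂ) : Mat n ℂ :=
  Matrix.diagonal (Sum.elim (fun i => w ^ kk i) (fun i => w ^ (-kk i)))

/-- A tuple `(k_1, …, k_n)` of integers is regular if each `k_i` is nonzero and
`k_i ≠ ±k_j` for all `i ≠ j`. -/
def Regular {n : ℕ} (kk : Fin n → ℤ) : Prop :=
  (∀ i, kk i ≠ 0) ∧ ∀ i j, i ≠ j → kk i ≠ kk j ∧ kk i ≠ -kk j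

/-- The 2n×2n permutation matrix swapping the n-th and 2n-th standard basis vectors
(i.e. the basis vectors indexed by `Sum.inl (n-1)` and `Sum.inr (n-1)`) and fixing
all others. -/
def hmat (n : ℕ) (hn : 0 < n) : Mat n ℂ :=
  Matrix.of fun i j =>
    if j = Equiv.swap (Sum.inl (⟨n - 1, by omega⟩ : Fin n))
        (Sum.inr (⟨n - 1, by omega⟩ : Fin n)) i then 1 else 0

/-! Put `T = J h`. Comparing entries in `T D_k(2) = D_k(2)⁻¹ T` shows that `T a b = 0` unless the
weights of `a` and `b` (the exponents of `w` in `D_k(w)`) add up to zero, which for a regular `k`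
happens only for the pairs `(i, n + i)` and `(n + i, i)`. So `T = [[0, B], [C, 0]]` with `B`, `C`
diagonal, and `T² = 1` gives `B C = C B = 1`; hence `det T = (-1)^n` and `Tᵀ Q T = Q`. The matrix
`h` is the permutation matrix of a transposition commuting with the permutation `Q`, so
`det J = det T · det h = (-1)^(n+1)` and `ν Q = Jᵀ Q J = hᵀ Q h = Q`, i.e. `ν = 1`. -/

open Equiv

section AntidiagonalBlocks

variable {ι R : Type*} [DecidableEq ι] [CommRing R]

lemma Matrix.eq_fromBlocks_diagonal_of_apply_eq_zero {T : Matrix (ι ⊕ ι) (ι ⊕ ι) R}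
    (h : ∀ a b, b ≠ sumComm ι ι a → T a b = 0) :
    T = fromBlocks 0 (diagonal fun i => T (.inl i) (.inr i))
      (diagonal fun i => T (.inr i) (.inl i)) 0 := by
  ext (i | i) (j | j) <;> by_cases hij : j = i <;> simp [diagonal_apply_ne', hij, h]

variable [Fintype ι]

lemma Matrix.apply_eq_zero_of_mul_diagonal_eq_diagonal_mul [NoZeroDivisors R]
    {A : Matrix ι ι R} {d d' : ι → R} (h : A * diagonal d = diagonal d' * A) {i j : ι}
    (hij : d j ≠ d' i) : A i j = 0 := by
  by_contra hA
  have hentry := congr_fun (congr_fun h i) j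
  rw [mul_diagonal, diagonal_mul, mul_comm (d' i)] at hentry
  exact hij (mul_left_cancel₀ hA hentry)

lemma Matrix.fromBlocks_zero_mul_self (B C : Matrix ι ι R) :
    fromBlocks 0 B C 0 * fromBlocks 0 B C 0 = fromBlocks (B * C) 0 0 (C * B) := by
  simp [fromBlocks_multiply]

lemma Matrix.det_fromBlocks_zero_one_one_zero :
    (fromBlocks 0 1 1 0 : Matrix (ι ⊕ ι) (ι ⊕ ι) R).det = (-1) ^ Fintype.card ι := by
  have hfactor : (fromBlocks 0 1 1 0 : Matrix (ι ⊕ ι) (ι ⊕ ι) R) =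
      fromBlocks 1 1 0 1 * fromBlocks 1 0 (-1) 1 * fromBlocks 1 1 0 1 * fromBlocks (-1) 0 0 1 := by
    simp [fromBlocks_multiply]
  simp [hfactor, det_neg]

lemma Matrix.det_fromBlocks_zero_zero (B C : Matrix ι ι R) :
    (fromBlocks 0 B C 0).det = (-1) ^ Fintype.card ι * (B.det * C.det) := by
  have hfactor : fromBlocks 0 B C 0 = fromBlocks B 0 0 C * fromBlocks 0 1 1 0 := by
    simp [fromBlocks_multiply]
  rw [hfactor, det_mul, det_fromBlocks_zero₁₂, det_fromBlocks_zero_one_one_zero, mul_comm]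

lemma Matrix.transpose_fromBlocks_zero_mul_mul (B C : Matrix ι ι R) :
    (fromBlocks 0 B C 0)ᵀ * fromBlocks 0 1 1 0 * fromBlocks 0 B C 0 =
      fromBlocks 0 (Cᵀ * B) (Bᵀ * C) 0 := by
  simp [fromBlocks_transpose, fromBlocks_multiply]

end AntidiagonalBlocks

lemma Equiv.sumComm_mul_swap_inl_inr {α : Type*} [DecidableEq α] (x : α) :
    sumComm α α * swap (.inl x) (.inr x) = swap (.inl x) (.inr x) * sumComm α α := by
  rw [mul_swap_eq_swap_mul]
  exact congrArg (· * sumComm α α) (swap_comm _ _)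

lemma Complex.two_zpow_injective : Function.Injective fun k : ℤ => (2 : ℂ) ^ k := by
  intro k l hkl
  have hreal : (((2 : ℝ) ^ k : ℝ) : ℂ) = ((2 : ℝ) ^ l : ℝ) := by push_cast; exact hkl
  exact zpow_right_injective₀ two_pos (by norm_num) (Complex.ofReal_injective hreal)

variable {n : ℕ}

lemma Qmat_eq_permMatrix : Qmat n = Perm.permMatrix ℂ (sumComm (Fin n) (Fin n)) := by
  ext (i | i) (j | j) <;> simp [Qmat, PEquiv.toMatrix_apply, one_apply, eq_comm]

lemma Qmat_ne_zero (hn : 0 < n) : Qmat n ≠ 0 := by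
  intro h
  simpa [Qmat] using congr_fun (congr_fun h (.inl ⟨0, hn⟩)) (.inr ⟨0, hn⟩)

section Hmat

variable (hn : 0 < n)

def hperm : Perm (Fin n ⊕ Fin n) := swap (.inl ⟨n - 1, by omega⟩) (.inr ⟨n - 1, by omega⟩)

lemma hmat_eq_permMatrix : hmat n hn = (hperm hn).permMatrix ℂ := by
  ext i j
  simp [hmat, hperm, PEquiv.toMatrix_apply, eq_comm]

lemma hmat_mul_self : hmat n hn * hmat n hn = 1 := by
  rw [hmat_eq_permMatrix, ← permMatrix_mul, hperm, Equiv.swap_mul_self, permMatrix_one]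

lemma det_hmat : (hmat n hn).det = -1 := by
  simp [hmat_eq_permMatrix, hperm]

lemma transpose_hmat_mul_Qmat_mul_hmat : (hmat n hn)ᵀ * Qmat n * hmat n hn = Qmat n := by
  rw [hmat_eq_permMatrix, Qmat_eq_permMatrix, transpose_permMatrix, hperm, swap_inv,
    ← permMatrix_mul, ← permMatrix_mul, sumComm_mul_swap_inl_inr, ← mul_assoc, Equiv.swap_mul_self,
    one_mul]

end Hmat

def weight (kk : Fin n → ℤ) : Fin n ⊕ Fin n → ℤ := Sum.elim kk (-kk)

lemma Dk_eq_diagonal (kk : Fin n → ℤ) (w : ℂ) : Dk kk w = diagonal fun a => w ^ weight kk a := by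
  ext (i | i) (j | j) <;> rfl

lemma Dk_inv (kk : Fin n → ℤ) {w : ℂ} (hw : w ≠ 0) : (Dk kk w)⁻¹ = Dk kk w⁻¹ := by
  refine inv_eq_right_inv ?_
  rw [Dk_eq_diagonal, Dk_eq_diagonal, diagonal_mul_diagonal, ← diagonal_one]
  congr 1
  ext a
  rw [_root_.inv_zpow, mul_inv_cancel₀ (zpow_ne_zero _ hw)]

lemma Regular.eq_sumComm_of_weight_add_eq_zero {kk : Fin n → ℤ} (hreg : Regular kk)
    {a b : Fin n ⊕ Fin n} (h : weight kk a + weight kk b = 0) : b = sumComm _ _ a := by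
  rcases a with i | i <;> rcases b with j | j <;> simp only [weight, Sum.elim_inl,
    Sum.elim_inr, Pi.neg_apply, sumComm_apply, Sum.swap_inl, Sum.swap_inr, reduceCtorEq,
    Sum.inl.injEq, Sum.inr.injEq] at h ⊢ <;> obtain rfl | hij := eq_or_ne i j
  all_goals first
    | rfl
    | exact absurd (by omega) (hreg.1 i)
    | exact absurd (by omega) (hreg.2 i j hij).1
    | exact absurd (by omega) (hreg.2 i j hij).2

lemma Regular.eq_fromBlocks_of_mul_Dk_eq {kk : Fin n → ℤ} (hreg : Regular kk) {T : Mat n ℂ}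
    (hT : T * Dk kk 2 = Dk kk 2⁻¹ * T) :
    T = fromBlocks 0 (diagonal fun i => T (.inl i) (.inr i))
      (diagonal fun i => T (.inr i) (.inl i)) 0 := by
  refine eq_fromBlocks_diagonal_of_apply_eq_zero fun a b hab => ?_
  rw [Dk_eq_diagonal, Dk_eq_diagonal] at hT
  refine apply_eq_zero_of_mul_diagonal_eq_diagonal_mul hT fun hpow => hab ?_
  refine hreg.eq_sumComm_of_weight_add_eq_zero ?_
  rw [_root_.inv_zpow'] at hpow
  linarith [Complex.two_zpow_injective hpow]

/-- If `J ∈ GO_{2n}(ℂ)` with `(Jh) D_k(w) (Jh)⁻¹ = D_k(w)⁻¹` for all `w ∈ ℂ×` and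
`(Jh)² = 1`, then `ν(J) = 1` and `det J = (-1)^(n+1)`; hence `J ∈ GSO_{2n}(ℂ)` iff
`n` is odd. -/
theorem go_h_involution (n : ℕ) (hn : 0 < n) (kk : Fin n → ℤ) (hreg : Regular kk)
    (J : Mat n ℂ) (ν : ℂ) (hJ : inGO n J ν)
    (hconj : ∀ w : ℂ, w ≠ 0 →
      (J * hmat n hn) * Dk kk w * (J * hmat n hn)⁻¹ = (Dk kk w)⁻¹)
    (hsq : (J * hmat n hn) * (J * hmat n hn) = 1) :
    ν = 1 ∧ J.det = (-1) ^ (n + 1) ∧ (inGSO n J ν ↔ Odd n) := by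
  set T := J * hmat n hn with hT
  have hJT : J = T * hmat n hn := by rw [hT, mul_assoc, hmat_mul_self, mul_one]
  have hTD : T * Dk kk 2 = Dk kk 2⁻¹ * T := by
    rw [← Dk_inv kk two_ne_zero, ← hconj 2 two_ne_zero, inv_eq_right_inv hsq, mul_assoc _ T, hsq,
      mul_one]
  have hblock := hreg.eq_fromBlocks_of_mul_Dk_eq hTD
  set B : Matrix (Fin n) (Fin n) ℂ := diagonal fun i => T (.inl i) (.inr i)
  set C : Matrix (Fin n) (Fin n) ℂ := diagonal fun i => T (.inr i) (.inl i)
  rw [hblock, fromBlocks_zero_mul_self, ← fromBlocks_one, fromBlocks_inj] at hsq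
  obtain ⟨hBC, -, -, hCB⟩ := hsq
  have hdetT : T.det = (-1) ^ n := by
    rw [hblock, det_fromBlocks_zero_zero, ← det_mul, hBC, det_one, mul_one, Fintype.card_fin]
  have hTQT : Tᵀ * Qmat n * T = Qmat n := by
    rw [hblock, Qmat, transpose_fromBlocks_zero_mul_mul, diagonal_transpose, diagonal_transpose,
      hBC, hCB]
  have hν : ν = 1 := by
    have hQ : ν • Qmat n = (1 : ℂ) • Qmat n :=
      calc ν • Qmat n = (hmat n hn)ᵀ * (Tᵀ * Qmat n * T) * hmat n hn := by
            rw [← hJ.2.2, hJT, transpose_mul]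
            simp only [Matrix.mul_assoc]
        _ = (1 : ℂ) • Qmat n := by rw [hTQT, transpose_hmat_mul_Qmat_mul_hmat, one_smul]
    exact smul_left_injective ℂ (Qmat_ne_zero hn) hQ
  have hdetJ : J.det = (-1) ^ (n + 1) := by rw [hJT, det_mul, hdetT, det_hmat, pow_succ]
  refine ⟨hν, hdetJ, ?_⟩
  rw [inGSO, hdetJ, hν, one_pow, neg_one_pow_eq_one_iff_even (by norm_num), Nat.even_add_one,
    Nat.not_even_iff_odd]
  exact and_iff_right (hν ▸ hJ)
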